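/- Soundness of the HPL tableau calculus: if there is a closed tableau with root formula @ᵢ@ₐ¬φ (i, a not occurring in φ), then φ is valid on all product Kripke frames. -/
import Mathlib


/-- Formulas of two-dimensional hybrid (product) logic. -/
inductive Form (P N1 N2 : Type) : Type
  | prop : P → Form P N1 N2
  | nom1 : N1 → Form P N1 N2
  | nom2 : N2 → Form P N1 N2
  | neg  : Form P N1 N2 → Form P N1 N2
  | and  : Form P N1 N2 → Form P N1 N2 → Form P N1 N2
  | dia1 : Form P N1 N2 → Form P N1 N2
  | dia2 : Form P N1 N2 → Form P N1 N2
  | at1  : N1 → Form P N1 N2 → Form P N1 N2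
  | at2  : N2 → Form P N1 N2 → Form P N1 N2

/-- A product Kripke model: two Kripke frames plus a valuation interpreting
propositional variables as sets of pairs and nominals as named points. -/
structure ProductModel (P N1 N2 W1 W2 : Type) : Type where
  R1 : W1 → W1 → Prop
  R2 : W2 → W2 → Prop
  V  : P → W1 × W2 → Prop
  v1 : N1 → W1
  v2 : N2 → W2

variable {P N1 N2 W1 W2 : Type}

/-- Horizontal accessibility. -/
def ProductModel.Rh (M : ProductModel P N1 N2 W1 W2) (w w' : W1 × W2) : Prop :=
  M.R1 w.1 w'.1 ∧ w.2 = w'.2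

/-- Vertical accessibility. -/
def ProductModel.Rv (M : ProductModel P N1 N2 W1 W2) (w w' : W1 × W2) : Prop :=
  w.1 = w'.1 ∧ M.R2 w.2 w'.2

/-- Satisfaction in a product model. -/
def ProductModel.sat (M : ProductModel P N1 N2 W1 W2) : W1 × W2 → Form P N1 N2 → Prop
  | w, .prop p  => M.V p w
  | w, .nom1 i  => w.1 = M.v1 i
  | w, .nom2 a  => w.2 = M.v2 a
  | w, .neg φ   => ¬ M.sat w φ
  | w, .and φ ψ => M.sat w φ ∧ M.sat w ψ
  | w, .dia1 φ  => ∃ w', M.Rh w w' ∧ M.sat w' φ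
  | w, .dia2 φ  => ∃ w', M.Rv w w' ∧ M.sat w' φ
  | w, .at1 i φ => M.sat (M.v1 i, w.2) φ
  | w, .at2 a φ => M.sat (w.1, M.v2 a) φ

/-- Occurrence of a first-sort nominal in a formula. -/
def occ1 {P N1 N2 : Type} (j : N1) : Form P N1 N2 → Prop
  | .prop _   => False
  | .nom1 i   => i = j
  | .nom2 _   => False
  | .neg φ    => occ1 j φ
  | .and φ ψ  => occ1 j φ ∨ occ1 j ψ
  | .dia1 φ   => occ1 j φ
  | .dia2 φ   => occ1 j φ
  | .at1 i φ  => i = j ∨ occ1 j φ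
  | .at2 _ φ  => occ1 j φ

/-- Occurrence of a second-sort nominal in a formula. -/
def occ2 {P N1 N2 : Type} (b : N2) : Form P N1 N2 → Prop
  | .prop _   => False
  | .nom1 _   => False
  | .nom2 a   => a = b
  | .neg φ    => occ2 b φ
  | .and φ ψ  => occ2 b φ ∨ occ2 b ψ
  | .dia1 φ   => occ2 b φ
  | .dia2 φ   => occ2 b φ
  | .at1 _ φ  => occ2 b φ
  | .at2 a φ  => a = b ∨ occ2 b φ

/-- Hybrid formulas over propositional variables and two sorts of nominals,
all indexed by natural numbers. -/
abbrev F := Form ℕ ℕ ℕ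

/-- A first-sort nominal is fresh for a branch if it occurs in none of its
formulas. -/
def fresh1 (j : ℕ) (L : List F) : Prop := ∀ ψ ∈ L, ¬ occ1 j ψ

/-- A second-sort nominal is fresh for a branch if it occurs in none of its
formulas. -/
def fresh2 (b : ℕ) (L : List F) : Prop := ∀ ψ ∈ L, ¬ occ2 b ψ


/-- A branch (list of formulas, most recent first) is closed if it contains a
contradiction at some prefix. -/
def ClosedL (L : List F) : Prop :=
  (∃ i a φ, Form.at1 i (Form.at2 a φ) ∈ L ∧ Form.at1 i (Form.at2 a (Form.neg φ)) ∈ L) ∨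
  (∃ i φ, Form.at1 i φ ∈ L ∧ Form.at1 i (Form.neg φ) ∈ L) ∨
  (∃ a φ, Form.at2 a φ ∈ L ∧ Form.at2 a (Form.neg φ) ∈ L)

/-- One application of a non-branching HPL tableau rule extending a branch `L`. -/
inductive StepNB : List F → List F → Prop
  | negneg : Form.at1 i (Form.at2 a (Form.neg (Form.neg φ))) ∈ L →
      StepNB L (Form.at1 i (Form.at2 a φ) :: L)
  | and : Form.at1 i (Form.at2 a (Form.and φ ψ)) ∈ L →
      StepNB L (Form.at1 i (Form.at2 a ψ) :: Form.at1 i (Form.at2 a φ) :: L)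
  | dia1 : Form.at1 i (Form.at2 a (Form.dia1 φ)) ∈ L → fresh1 j L →
      StepNB L (Form.at1 j (Form.at2 a φ) :: Form.at1 i (Form.dia1 (Form.nom1 j)) :: L)
  | dia2 : Form.at1 i (Form.at2 a (Form.dia2 φ)) ∈ L → fresh2 b L →
      StepNB L (Form.at1 i (Form.at2 b φ) :: Form.at2 a (Form.dia2 (Form.nom2 b)) :: L)
  | negDia1 : Form.at1 i (Form.at2 a (Form.neg (Form.dia1 φ))) ∈ L →
      Form.at1 i (Form.dia1 (Form.nom1 j)) ∈ L →
      StepNB L (Form.at1 j (Form.at2 a (Form.neg φ)) :: L)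
  | negDia2 : Form.at1 i (Form.at2 a (Form.neg (Form.dia2 φ))) ∈ L →
      Form.at2 a (Form.dia2 (Form.nom2 b)) ∈ L →
      StepNB L (Form.at1 i (Form.at2 b (Form.neg φ)) :: L)
  | at1 : Form.at1 i (Form.at2 a (Form.at1 j φ)) ∈ L →
      StepNB L (Form.at1 j (Form.at2 a φ) :: L)
  | at2 : Form.at1 i (Form.at2 a (Form.at2 b φ)) ∈ L →
      StepNB L (Form.at1 i (Form.at2 b φ) :: L)
  | negAt1 : Form.at1 i (Form.at2 a (Form.neg (Form.at1 j φ))) ∈ L →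
      StepNB L (Form.at1 j (Form.at2 a (Form.neg φ)) :: L)
  | negAt2 : Form.at1 i (Form.at2 a (Form.neg (Form.at2 b φ))) ∈ L →
      StepNB L (Form.at1 i (Form.at2 b (Form.neg φ)) :: L)
  | red1a : Form.at1 i (Form.at2 a (Form.nom1 k)) ∈ L →
      StepNB L (Form.at1 i (Form.nom1 k) :: L)
  | red1b : Form.at1 i (Form.at2 a (Form.neg (Form.nom1 k))) ∈ L →
      StepNB L (Form.at1 i (Form.neg (Form.nom1 k)) :: L)
  | red2a : Form.at1 i (Form.at2 a (Form.nom2 c)) ∈ L →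
      StepNB L (Form.at2 a (Form.nom2 c) :: L)
  | red2b : Form.at1 i (Form.at2 a (Form.neg (Form.nom2 c))) ∈ L →
      StepNB L (Form.at2 a (Form.neg (Form.nom2 c)) :: L)
  | neg1 : Form.at1 i (Form.neg (Form.nom1 j)) ∈ L →
      StepNB L (Form.at1 j (Form.nom1 j) :: L)
  | neg2 : Form.at2 a (Form.neg (Form.nom2 b)) ∈ L →
      StepNB L (Form.at2 b (Form.nom2 b) :: L)
  | id1 : Form.at1 i (Form.at2 a φ) ∈ L → Form.at1 i (Form.nom1 j) ∈ L →
      StepNB L (Form.at1 j (Form.at2 a φ) :: L)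
  | id2 : Form.at1 i (Form.at2 a φ) ∈ L → Form.at2 a (Form.nom2 b) ∈ L →
      StepNB L (Form.at1 i (Form.at2 b φ) :: L)
  | id'1a : Form.at1 i (Form.nom1 k) ∈ L → Form.at1 i (Form.nom1 j) ∈ L →
      StepNB L (Form.at1 j (Form.nom1 k) :: L)
  | id'1b : Form.at1 i (Form.neg (Form.nom1 k)) ∈ L → Form.at1 i (Form.nom1 j) ∈ L →
      StepNB L (Form.at1 j (Form.neg (Form.nom1 k)) :: L)
  | id'2a : Form.at2 a (Form.nom2 c) ∈ L → Form.at2 a (Form.nom2 b) ∈ L →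
      StepNB L (Form.at2 b (Form.nom2 c) :: L)
  | id'2b : Form.at2 a (Form.neg (Form.nom2 c)) ∈ L → Form.at2 a (Form.nom2 b) ∈ L →
      StepNB L (Form.at2 b (Form.neg (Form.nom2 c)) :: L)


/-- `ClosedTab L`: the branch `L` can be extended, by the HPL tableau rules,
to a finite tableau (tree) all of whose branches are closed.  The branching
rule `[¬∧]` requires both of the resulting branches to be closed. -/
inductive ClosedTab : List F → Prop
  | closed : ClosedL L → ClosedTab L
  | step : StepNB L L' → ClosedTab L' → ClosedTab L
  | split : Form.at1 i (Form.at2 a (Form.neg (Form.and φ ψ))) ∈ L →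
      ClosedTab (Form.at1 i (Form.at2 a (Form.neg φ)) :: L) →
      ClosedTab (Form.at1 i (Form.at2 a (Form.neg ψ)) :: L) →
      ClosedTab L

section Aux

variable {U1 U2 : Type}

/-- Update the first-sort nominal assignment at one nominal. -/
def upd1 (M : ProductModel ℕ ℕ ℕ U1 U2) (j : ℕ) (x : U1) : ProductModel ℕ ℕ ℕ U1 U2 :=
  { M with v1 := Function.update M.v1 j x }

/-- Update the second-sort nominal assignment at one nominal. -/
def upd2 (M : ProductModel ℕ ℕ ℕ U1 U2) (b : ℕ) (y : U2) : ProductModel ℕ ℕ ℕ U1 U2 :=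
  { M with v2 := Function.update M.v2 b y }

lemma sat_upd1 {M : ProductModel ℕ ℕ ℕ U1 U2} {j : ℕ} {x : U1} {ψ : F}
    (h : ¬ occ1 j ψ) : ∀ w, (upd1 M j x).sat w ψ ↔ M.sat w ψ := by
  induction ψ with
  | prop p => intro w; simp [ProductModel.sat, upd1]
  | nom1 k =>
      intro w; simp only [occ1] at h
      simp [ProductModel.sat, upd1, Function.update_of_ne h]
  | nom2 c => intro w; simp [ProductModel.sat, upd1]
  | neg ψ ih => intro w; simp only [occ1] at h; simp [ProductModel.sat, ih h]
  | and ψ χ ih1 ih2 =>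
      intro w; simp only [occ1] at h; push_neg at h
      simp [ProductModel.sat, ih1 h.1, ih2 h.2]
  | dia1 ψ ih =>
      intro w; simp only [occ1] at h
      simp only [ProductModel.sat]
      constructor <;> rintro ⟨w', hw, hs⟩ <;> exact ⟨w', hw, by
        first
        | exact (ih h w').mp hs
        | exact (ih h w').mpr hs⟩
  | dia2 ψ ih =>
      intro w; simp only [occ1] at h
      simp only [ProductModel.sat]
      constructor <;> rintro ⟨w', hw, hs⟩ <;> exact ⟨w', hw, by
        first
        | exact (ih h w').mp hs
        | exact (ih h w').mpr hs⟩
  | at1 k ψ ih =>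
      intro w; simp only [occ1] at h; push_neg at h
      have hv : (upd1 M j x).v1 k = M.v1 k := by
        simp [upd1, Function.update_of_ne h.1]
      simp [ProductModel.sat, hv, ih h.2]
  | at2 c ψ ih =>
      intro w; simp only [occ1] at h
      have hv : (upd1 M j x).v2 c = M.v2 c := rfl
      simp [ProductModel.sat, hv, ih h]

lemma sat_upd2 {M : ProductModel ℕ ℕ ℕ U1 U2} {b : ℕ} {y : U2} {ψ : F}
    (h : ¬ occ2 b ψ) : ∀ w, (upd2 M b y).sat w ψ ↔ M.sat w ψ := by
  induction ψ with
  | prop p => intro w; simp [ProductModel.sat, upd2]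
  | nom2 k =>
      intro w; simp only [occ2] at h
      simp [ProductModel.sat, upd2, Function.update_of_ne h]
  | nom1 c => intro w; simp [ProductModel.sat, upd2]
  | neg ψ ih => intro w; simp only [occ2] at h; simp [ProductModel.sat, ih h]
  | and ψ χ ih1 ih2 =>
      intro w; simp only [occ2] at h; push_neg at h
      simp [ProductModel.sat, ih1 h.1, ih2 h.2]
  | dia1 ψ ih =>
      intro w; simp only [occ2] at h
      simp only [ProductModel.sat]
      constructor <;> rintro ⟨w', hw, hs⟩ <;> exact ⟨w', hw, by
        first
        | exact (ih h w').mp hs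
        | exact (ih h w').mpr hs⟩
  | dia2 ψ ih =>
      intro w; simp only [occ2] at h
      simp only [ProductModel.sat]
      constructor <;> rintro ⟨w', hw, hs⟩ <;> exact ⟨w', hw, by
        first
        | exact (ih h w').mp hs
        | exact (ih h w').mpr hs⟩
  | at2 k ψ ih =>
      intro w; simp only [occ2] at h; push_neg at h
      have hv : (upd2 M b y).v2 k = M.v2 k := by
        simp [upd2, Function.update_of_ne h.1]
      simp [ProductModel.sat, hv, ih h.2]
  | at1 c ψ ih =>
      intro w; simp only [occ2] at h
      have hv : (upd2 M b y).v1 c = M.v1 c := rfl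
      simp [ProductModel.sat, hv, ih h]

/-- A model is faithful to a branch if every formula on the branch holds at
every point (branch formulas are globally true, being @-prefixed). -/
def Faithful (M : ProductModel ℕ ℕ ℕ U1 U2) (L : List F) : Prop :=
  ∀ ψ ∈ L, ∀ w, M.sat w ψ

lemma faithful_cons {M : ProductModel ℕ ℕ ℕ U1 U2} {x : F} {L : List F}
    (hx : ∀ w, M.sat w x) (hL : Faithful M L) : Faithful M (x :: L) := by
  intro ψ hψ w
  rcases List.mem_cons.mp hψ with rfl | hψ
  · exact hx w
  · exact hL ψ hψ w

lemma sat_at12 (M : ProductModel ℕ ℕ ℕ U1 U2) (i a : ℕ) (ψ : F) (w : U1 × U2) :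
    M.sat w (Form.at1 i (Form.at2 a ψ)) ↔ M.sat (M.v1 i, M.v2 a) ψ := by
  simp [ProductModel.sat]

lemma key {L : List F} (h : ClosedTab L) (w0 : U1 × U2) :
    ∀ M : ProductModel ℕ ℕ ℕ U1 U2, Faithful M L → False := by
  induction h with
  | @closed L hc =>
      intro M hf
      rcases hc with ⟨i, a, ψ, h1, h2⟩ | ⟨i, ψ, h1, h2⟩ | ⟨a, ψ, h1, h2⟩
      · have s1 := hf _ h1 w0
        have s2 := hf _ h2 w0
        rw [sat_at12] at s1 s2
        exact s2 s1
      · have s1 := hf _ h1 w0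
        have s2 := hf _ h2 w0
        simp only [ProductModel.sat] at s2
        exact s2 s1
      · have s1 := hf _ h1 w0
        have s2 := hf _ h2 w0
        simp only [ProductModel.sat] at s2
        exact s2 s1
  | @step L L' hs _ ih =>
      intro M hf
      cases hs with
      | @negneg i a φ hmem =>
          refine ih M (faithful_cons (fun w => ?_) hf)
          have := hf _ hmem w
          rw [sat_at12] at this ⊢
          simp only [ProductModel.sat] at this
          exact not_not.mp this
      | @and i a φ ψ hmem =>
          have h1 := hf _ hmem w0
          rw [sat_at12] at h1
          simp only [ProductModel.sat] at h1
          refine ih M (faithful_cons (fun w => ?_) (faithful_cons (fun w => ?_) hf)) <;>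
            rw [sat_at12]
          · exact h1.2
          · exact h1.1
      | @dia1 i a φ j hmem hfresh =>
          have h1 := hf _ hmem w0
          rw [sat_at12] at h1
          obtain ⟨w', hR, hφ⟩ := h1
          have hocc := hfresh _ hmem
          simp only [occ1] at hocc
          push_neg at hocc
          obtain ⟨hij, hjφ⟩ := hocc
          set M' := upd1 M j w'.1 with hM'
          have hv1i : M'.v1 i = M.v1 i := by
            simp [hM', upd1, Function.update_of_ne hij]
          have hv1j : M'.v1 j = w'.1 := by simp [hM', upd1]
          have hv2 : ∀ c, M'.v2 c = M.v2 c := fun _ => rfl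
          refine ih M' (faithful_cons (fun w => ?_) (faithful_cons (fun w => ?_) ?_))
          · -- @j @a φ
            rw [sat_at12, hv1j, hv2]
            have hw' : (w'.1, M.v2 a) = w' := by
              rcases hR with ⟨_, h2⟩; exact Prod.ext rfl h2
            rw [hw']
            exact (sat_upd1 hjφ w').mpr hφ
          · -- @i ◇₁ j
            simp only [ProductModel.sat, hv1i]
            refine ⟨(w'.1, w.2), ⟨?_, rfl⟩, ?_⟩
            · exact hR.1
            · simp [ProductModel.sat, hv1j]
          · intro ψ hψ w
            exact (sat_upd1 (hfresh ψ hψ) w).mpr (hf ψ hψ w)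
      | @dia2 i a φ b hmem hfresh =>
          have h1 := hf _ hmem w0
          rw [sat_at12] at h1
          obtain ⟨w', hR, hφ⟩ := h1
          have hocc := hfresh _ hmem
          simp only [occ2] at hocc
          push_neg at hocc
          obtain ⟨hab, hbφ⟩ := hocc
          set M' := upd2 M b w'.2 with hM'
          have hv2a : M'.v2 a = M.v2 a := by
            simp [hM', upd2, Function.update_of_ne hab]
          have hv2b : M'.v2 b = w'.2 := by simp [hM', upd2]
          have hv1 : ∀ c, M'.v1 c = M.v1 c := fun _ => rfl
          refine ih M' (faithful_cons (fun w => ?_) (faithful_cons (fun w => ?_) ?_))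
          · -- @i @b φ
            rw [sat_at12, hv1, hv2b]
            have hw' : (M.v1 i, w'.2) = w' := by
              rcases hR with ⟨h1', _⟩; exact Prod.ext h1' rfl
            rw [hw']
            exact (sat_upd2 hbφ w').mpr hφ
          · -- @a ◇₂ b
            simp only [ProductModel.sat, hv2a]
            refine ⟨(w.1, w'.2), ⟨rfl, ?_⟩, ?_⟩
            · exact hR.2
            · simp [ProductModel.sat, hv2b]
          · intro ψ hψ w
            exact (sat_upd2 (hfresh ψ hψ) w).mpr (hf ψ hψ w)
      | @negDia1 i a φ j hmem hdia =>
          have h1 := hf _ hmem w0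
          rw [sat_at12] at h1
          simp only [ProductModel.sat] at h1
          have h2 := hf _ hdia w0
          simp only [ProductModel.sat] at h2
          obtain ⟨w', hR, hj⟩ := h2
          refine ih M (faithful_cons (fun w => ?_) hf)
          rw [sat_at12]
          simp only [ProductModel.sat]
          intro hsat
          refine h1 ⟨(M.v1 j, M.v2 a), ⟨?_, rfl⟩, hsat⟩
          have : w'.1 = M.v1 j := hj
          rw [← this]; exact hR.1
      | @negDia2 i a φ b hmem hdia =>
          have h1 := hf _ hmem w0
          rw [sat_at12] at h1
          simp only [ProductModel.sat] at h1
          have h2 := hf _ hdia w0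
          simp only [ProductModel.sat] at h2
          obtain ⟨w', hR, hb⟩ := h2
          refine ih M (faithful_cons (fun w => ?_) hf)
          rw [sat_at12]
          simp only [ProductModel.sat]
          intro hsat
          refine h1 ⟨(M.v1 i, M.v2 b), ⟨rfl, ?_⟩, hsat⟩
          have : w'.2 = M.v2 b := hb
          rw [← this]; exact hR.2
      | @at1 i a j φ hmem =>
          refine ih M (faithful_cons (fun w => ?_) hf)
          have := hf _ hmem w
          rw [sat_at12] at this ⊢
          simpa [ProductModel.sat] using this
      | @at2 i a b φ hmem =>
          refine ih M (faithful_cons (fun w => ?_) hf)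
          have := hf _ hmem w
          rw [sat_at12] at this ⊢
          simpa [ProductModel.sat] using this
      | @negAt1 i a j φ hmem =>
          refine ih M (faithful_cons (fun w => ?_) hf)
          have := hf _ hmem w
          rw [sat_at12] at this ⊢
          simp only [ProductModel.sat] at this ⊢
          simpa [ProductModel.sat] using this
      | @negAt2 i a b φ hmem =>
          refine ih M (faithful_cons (fun w => ?_) hf)
          have := hf _ hmem w
          rw [sat_at12] at this ⊢
          simp only [ProductModel.sat] at this ⊢
          simpa [ProductModel.sat] using this
      | @red1a i a k hmem =>
          refine ih M (faithful_cons (fun w => ?_) hf)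
          have := hf _ hmem w
          rw [sat_at12] at this
          simpa [ProductModel.sat] using this
      | @red1b i a k hmem =>
          refine ih M (faithful_cons (fun w => ?_) hf)
          have := hf _ hmem w
          rw [sat_at12] at this
          simpa [ProductModel.sat] using this
      | @red2a i a c hmem =>
          refine ih M (faithful_cons (fun w => ?_) hf)
          have := hf _ hmem w
          rw [sat_at12] at this
          simpa [ProductModel.sat] using this
      | @red2b i a c hmem =>
          refine ih M (faithful_cons (fun w => ?_) hf)
          have := hf _ hmem w
          rw [sat_at12] at this
          simpa [ProductModel.sat] using this
      | @neg1 i j hmem =>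
          exact ih M (faithful_cons (fun w => by simp [ProductModel.sat]) hf)
      | @neg2 a b hmem =>
          exact ih M (faithful_cons (fun w => by simp [ProductModel.sat]) hf)
      | @id1 i a φ j hmem hnom =>
          refine ih M (faithful_cons (fun w => ?_) hf)
          have h1 := hf _ hmem w
          have h2 := hf _ hnom w
          simp only [ProductModel.sat] at h2
          rw [sat_at12] at h1 ⊢
          rwa [← h2]
      | @id2 i a φ b hmem hnom =>
          refine ih M (faithful_cons (fun w => ?_) hf)
          have h1 := hf _ hmem w
          have h2 := hf _ hnom w
          simp only [ProductModel.sat] at h2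
          rw [sat_at12] at h1 ⊢
          rwa [← h2]
      | @id'1a i k j hmem hnom =>
          refine ih M (faithful_cons (fun w => ?_) hf)
          have h1 := hf _ hmem w
          have h2 := hf _ hnom w
          simp only [ProductModel.sat] at h1 h2 ⊢
          rw [← h2]; exact h1
      | @id'1b i k j hmem hnom =>
          refine ih M (faithful_cons (fun w => ?_) hf)
          have h1 := hf _ hmem w
          have h2 := hf _ hnom w
          simp only [ProductModel.sat] at h1 h2 ⊢
          rw [← h2]; exact h1
      | @id'2a a c b hmem hnom =>
          refine ih M (faithful_cons (fun w => ?_) hf)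
          have h1 := hf _ hmem w
          have h2 := hf _ hnom w
          simp only [ProductModel.sat] at h1 h2 ⊢
          rw [← h2]; exact h1
      | @id'2b a c b hmem hnom =>
          refine ih M (faithful_cons (fun w => ?_) hf)
          have h1 := hf _ hmem w
          have h2 := hf _ hnom w
          simp only [ProductModel.sat] at h1 h2 ⊢
          rw [← h2]; exact h1
  | @split i a φ ψ L hmem _ _ ih1 ih2 =>
      intro M hf
      have h1 := hf _ hmem w0
      rw [sat_at12] at h1
      simp only [ProductModel.sat] at h1
      rcases not_and_or.mp h1 with h | h
      · refine ih1 M (faithful_cons (fun w => ?_) hf)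
        rw [sat_at12]; exact h
      · refine ih2 M (faithful_cons (fun w => ?_) hf)
        rw [sat_at12]; exact h

end Aux

/-- soundness of the HPL tableau calculus: if there is a
closed tableau with root formula `@ᵢ@ₐ¬φ`, where `i` and `a` do not occur in
`φ`, then `φ` is valid on all product Kripke frames. -/
theorem tableau_soundness (φ : F) (i a : ℕ)
    (hi : ¬ occ1 i φ) (ha : ¬ occ2 a φ)
    (hclosed : ClosedTab [Form.at1 i (Form.at2 a (Form.neg φ))]) :
    ∀ (W1 W2 : Type) (M : ProductModel ℕ ℕ ℕ W1 W2) (w : W1 × W2),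
      M.sat w φ := by
  intro W1 W2 M w
  by_contra hns
  set M' := upd2 (upd1 M i w.1) a w.2 with hM'
  refine key hclosed w M' ?_
  intro ψ hψ w'
  rcases List.mem_singleton.mp hψ with rfl
  rw [sat_at12]
  have hv1 : M'.v1 i = w.1 := by simp [hM', upd2, upd1]
  have hv2 : M'.v2 a = w.2 := by simp [hM', upd2, upd1]
  rw [hv1, hv2]
  simp only [ProductModel.sat]
  intro hsat
  apply hns
  have h1 : (upd1 M i w.1).sat (w.1, w.2) φ := (sat_upd2 ha _).mp hsat
  have h2 : M.sat (w.1, w.2) φ := (sat_upd1 hi _).mp h1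
  exact h2
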